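/- arXiv:0805.2558 — 3 statements merged into one kernel-verified Lean document; each statement's English description precedes it below -/
import Mathlib

section
/- If I(u_1,u_2,u_3) satisfies the Euler-Poisson-Darboux equations 2(u_i - u_j) ∂²I/∂u_i∂u_j = ∂I/∂u_i - ∂I/∂u_j, and λ_i = γ - I/(∂I/∂u_i) with γ = u_1 + u_2 + u_3 + 2ν, then for i ≠ j the quotient B_ij := (∂λ_i/∂u_j)/(λ_i - λ_j) equals (1/2)·[(λ_i - γ) - 2(u_i - u_j)] / [(λ_j - γ)(u_i - u_j)]. -/
open Real Filter Topology Set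

/-- Partial derivative of `F : (Fin 3 → ℝ) → ℝ` in the `i`-th coordinate at `u`. -/
noncomputable def pd (F : (Fin 3 → ℝ) → ℝ) (i : Fin 3) (u : Fin 3 → ℝ) : ℝ :=
  deriv (fun x => F (Function.update u i x)) (u i)

lemma update_eq (u : Fin 3 → ℝ) (i : Fin 3) (x : ℝ) :
    Function.update u i x = u + (x - u i) • (Pi.single i 1 : Fin 3 → ℝ) := by
  funext k
  by_cases h : k = i
  · subst h; simp
  · simp [Function.update_apply, h, Pi.single_apply, Ne.symm h]

lemma pd_hasDerivAt (F : (Fin 3 → ℝ) → ℝ) (hF : Differentiable ℝ F) (i : Fin 3)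
    (u : Fin 3 → ℝ) :
    HasDerivAt (fun x => F (Function.update u i x))
      (fderiv ℝ F u (Pi.single i 1)) (u i) := by
  have hg : HasDerivAt (fun x : ℝ => u + (x - u i) • (Pi.single i 1 : Fin 3 → ℝ))
      (Pi.single i 1) (u i) := by
    have h1 : HasDerivAt (fun x : ℝ => x - u i) 1 (u i) := (hasDerivAt_id _).sub_const _
    have := (h1.smul_const (Pi.single i 1 : Fin 3 → ℝ)).const_add u
    simpa using this
  have hF' : HasFDerivAt F (fderiv ℝ F u)
      (u + ((u i) - u i) • (Pi.single i 1 : Fin 3 → ℝ)) := by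
    simpa using (hF u).hasFDerivAt
  have := hF'.comp_hasDerivAt (u i) hg
  simpa [update_eq, Function.comp_def] using this

lemma pd_eq (F : (Fin 3 → ℝ) → ℝ) (hF : Differentiable ℝ F) (i : Fin 3) (u : Fin 3 → ℝ) :
    pd F i u = fderiv ℝ F u (Pi.single i 1) := (pd_hasDerivAt F hF i u).deriv

/-- If `I` satisfies the Euler-Poisson-Darboux equations and
`λ_i = γ - I/∂_{u_i}I` with `γ = u_1 + u_2 + u_3 + 2ν`, then for `i ≠ j`,
`B_ij = (∂λ_i/∂u_j)/(λ_i - λ_j) = (1/2)[(λ_i - γ) - 2(u_i - u_j)]/[(λ_j - γ)(u_i - u_j)]`. -/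
theorem B_ij_formula (ν : ℝ) (I : (Fin 3 → ℝ) → ℝ) (hI : ContDiff ℝ (⊤ : ℕ∞) I)
    (hEPD : ∀ (u : Fin 3 → ℝ) (i j : Fin 3),
      2 * (u i - u j) * pd (pd I j) i u = pd I i u - pd I j u)
    (hInz : ∀ (u : Fin 3 → ℝ) (i : Fin 3), pd I i u ≠ 0)
    (lam : Fin 3 → (Fin 3 → ℝ) → ℝ)
    (hlam : ∀ (i : Fin 3) (u : Fin 3 → ℝ),
      lam i u = (u 0 + u 1 + u 2 + 2 * ν) - I u / pd I i u)
    (u : Fin 3 → ℝ) (i j : Fin 3) (hij : i ≠ j)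
    (hll : lam i u ≠ lam j u) (huu : u i ≠ u j) :
    pd (lam i) j u / (lam i u - lam j u) =
      (1 / 2) * ((lam i u - (u 0 + u 1 + u 2 + 2 * ν)) - 2 * (u i - u j)) /
        ((lam j u - (u 0 + u 1 + u 2 + 2 * ν)) * (u i - u j)) := by
  have hId : Differentiable ℝ I := hI.differentiable (by simp)
  -- pd I i as a smooth function
  have hJc : ∀ k : Fin 3, ContDiff ℝ (⊤ : ℕ∞) (fun v => fderiv ℝ I v (Pi.single k 1)) := by
    intro k
    exact (ContinuousLinearMap.apply ℝ ℝ (Pi.single k 1 : Fin 3 → ℝ)).contDiff.comp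
      (hI.fderiv_right (by simp))
  have hpdeq : ∀ k : Fin 3, pd I k = fun v => fderiv ℝ I v (Pi.single k 1) := by
    intro k; funext v; exact pd_eq I hId k v
  have hJd : Differentiable ℝ (pd I i) := by
    rw [hpdeq]; exact (hJc i).differentiable (by simp)
  -- derivative of the sum part
  have hs : HasDerivAt (fun x => (Function.update u j x) 0 + (Function.update u j x) 1 +
      (Function.update u j x) 2 + 2 * ν) 1 (u j) := by
    fin_cases j
    · simpa [Function.update_apply, Fin.ext_iff] using
        (((hasDerivAt_id (u 0)).add_const (u 1)).add_const (u 2)).add_const (2*ν)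
    · have h := (((hasDerivAt_id (u 1)).const_add (u 0)).add_const (u 2)).add_const (2*ν)
      simpa [Function.update_apply, Fin.ext_iff] using h
    · have h := ((((hasDerivAt_id (u 2)).const_add (u 1)).const_add (u 0)).add_const (2*ν))
      simpa [Function.update_apply, Fin.ext_iff, add_assoc] using h
  have ha : HasDerivAt (fun x => I (Function.update u j x)) (pd I j u) (u j) := by
    rw [pd_eq I hId j u]; exact pd_hasDerivAt I hId j u
  have hb : HasDerivAt (fun x => pd I i (Function.update u j x)) (pd (pd I i) j u) (u j) := by
    rw [pd_eq (pd I i) hJd j u]; exact pd_hasDerivAt (pd I i) hJd j u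
  have hq := ha.div hb (show pd I i (Function.update u j (u j)) ≠ 0 by
    rw [Function.update_eq_self]; exact hInz u i)
  simp only [Function.update_eq_self] at hq
  have hfull := hs.sub hq
  have heq : (fun x => (Function.update u j x) 0 + (Function.update u j x) 1 +
      (Function.update u j x) 2 + 2 * ν - I (Function.update u j x) /
        pd I i (Function.update u j x)) = fun x => lam i (Function.update u j x) := by
    funext x; rw [hlam i]
  simp only [Pi.sub_def, Pi.div_def] at hfull
  rw [heq] at hfull
  have hpdlam : pd (lam i) j u = 1 - (pd I j u * pd I i u - I u * pd (pd I i) j u) /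
      pd I i u ^ 2 := hfull.deriv
  -- algebra
  have hepd : 2 * (u j - u i) * pd (pd I i) j u = pd I j u - pd I i u := hEPD u j i
  set A := I u with hA
  set P := pd I i u with hP
  set Q := pd I j u with hQ
  set D := pd (pd I i) j u with hD
  have hPz : P ≠ 0 := hInz u i
  have hQz : Q ≠ 0 := hInz u j
  have hli : lam i u = (u 0 + u 1 + u 2 + 2 * ν) - A / P := hlam i u
  have hlj : lam j u = (u 0 + u 1 + u 2 + 2 * ν) - A / Q := hlam j u
  have hAz : A ≠ 0 := by
    intro h
    apply hll
    rw [hli, hlj, h]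
    simp
  have huu' : u j - u i ≠ 0 := sub_ne_zero.mpr (Ne.symm huu)
  have huu2 : u i - u j ≠ 0 := sub_ne_zero.mpr huu
  have hDval : D = (Q - P) / (2 * (u j - u i)) := by
    field_simp
    linarith
  have hll' : lam i u - lam j u ≠ 0 := sub_ne_zero.mpr hll
  rw [hli, hlj] at hll'
  have hll2 : A / Q - A / P ≠ 0 := by
    intro h; apply hll'; linarith
  rw [hpdlam, hDval, hli, hlj]
  set v := u 0 + u 1 + u 2 + 2 * ν
  have key : (1 - (Q * P - A * ((Q - P) / (2 * (u j - u i)))) / P ^ 2) / (A / Q - A / P) =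
      1 / 2 * (-(A / P) - 2 * (u i - u j)) / (-(A / Q) * (u i - u j)) := by
    rw [div_eq_div_iff]
    · field_simp
      ring
    · exact hll2
    · exact mul_ne_zero (neg_ne_zero.mpr (div_ne_zero hAz hQz)) huu2
  calc (1 - (Q * P - A * ((Q - P) / (2 * (u j - u i)))) / P ^ 2) / (v - A / P - (v - A / Q))
      = (1 - (Q * P - A * ((Q - P) / (2 * (u j - u i)))) / P ^ 2) / (A / Q - A / P) := by
        ring_nf
    _ = 1 / 2 * (-(A / P) - 2 * (u i - u j)) / (-(A / Q) * (u i - u j)) := key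
    _ = 1 / 2 * (v - A / P - v - 2 * (u i - u j)) / ((v - A / Q - v) * (u i - u j)) := by
        ring_nf
end

section
/- For 0 < s < 1, the ratio of the complete elliptic integrals of the first and second kind satisfies 1/(1 - s/2) < K(s)/E(s) < (1 - s/2)/(1 - s). -/
open Real Filter Topology Set

/-- Complete elliptic integral of the first kind (parameter = modulus squared). -/
noncomputable def Kel (s : ℝ) : ℝ :=
  ∫ θ in (0:ℝ)..(π / 2), 1 / Real.sqrt (1 - s * Real.sin θ ^ 2)

/-- Complete elliptic integral of the second kind (parameter = modulus squared). -/
noncomputable def Eel (s : ℝ) : ℝ :=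
  ∫ θ in (0:ℝ)..(π / 2), Real.sqrt (1 - s * Real.sin θ ^ 2)

/-
Write `u = sin² θ` and `Δ = √(1 - s u)`. Multiplying out, the two inequalities say
`E < (1 - s/2) K` and `(1 - s) K < (1 - s/2) E`, and the differences are the integrals
`(s/2) ∫ (2u - 1) / Δ` and `(s/2) ∫ (1 - (2 - s) u) / Δ ≥ (s/2) ∫ (1 - 2u) Δ` over
`[0, π/2]`. Since `∫₀^{π/2} (2u - 1) dθ = 0`, Chebyshev's inequality makes `∫ (2u - 1) w(u)`
positive for every strictly increasing weight `w`; take `w = 1/Δ` and `w = -Δ`.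
-/

open MeasureTheory

namespace KERatio

variable {s : ℝ}

lemma one_sub_mul_sin_sq_pos (hs : s < 1) (θ : ℝ) : 0 < 1 - s * sin θ ^ 2 := by
  nlinarith [sin_sq_le_one θ, sq_nonneg (sin θ),
    mul_nonneg (sq_nonneg (sin θ)) (sub_nonneg.2 hs.le)]

lemma sqrt_one_sub_mul_sin_sq_pos (hs : s < 1) (θ : ℝ) : 0 < √(1 - s * sin θ ^ 2) :=
  Real.sqrt_pos.2 (one_sub_mul_sin_sq_pos hs θ)

lemma continuous_div_sqrt_one_sub_mul_sin_sq (hs : s < 1) {f : ℝ → ℝ} (hf : Continuous f) :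
    Continuous fun θ => f θ / √(1 - s * sin θ ^ 2) :=
  hf.div (by fun_prop) fun θ => (sqrt_one_sub_mul_sin_sq_pos hs θ).ne'

lemma integral_two_mul_sin_sq_sub_one : ∫ θ in (0:ℝ)..(π / 2), (2 * sin θ ^ 2 - 1) = 0 := by
  rw [intervalIntegral.integral_sub
    ((by fun_prop : Continuous fun θ => 2 * sin θ ^ 2).intervalIntegrable _ _)
    intervalIntegrable_const, intervalIntegral.integral_const_mul, integral_sin_sq]
  simp only [sin_zero, cos_pi_div_two, intervalIntegral.integral_const, smul_eq_mul]
  ring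

lemma integral_two_mul_sin_sq_sub_one_mul_pos {w : ℝ → ℝ} (hw : StrictMonoOn w (Icc 0 1))
    (hwc : ContinuousOn w (Icc 0 1)) :
    0 < ∫ θ in (0:ℝ)..(π / 2), (2 * sin θ ^ 2 - 1) * w (sin θ ^ 2) := by
  have hmaps : MapsTo (fun θ : ℝ => sin θ ^ 2) (Icc 0 (π / 2)) (Icc 0 1) :=
    fun θ _ => ⟨sq_nonneg _, sin_sq_le_one θ⟩
  have half_mem : (1 / 2 : ℝ) ∈ Icc 0 1 := by norm_num
  -- Chebyshev: `∫ (2u - 1)` vanishes, and `(2u - 1) (w u - w (1/2)) ≥ 0` since `w` is monotone.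
  set c := w (1 / 2)
  set f := fun θ => (2 * sin θ ^ 2 - 1) * (w (sin θ ^ 2) - c)
  have hfc : ContinuousOn f (Icc 0 (π / 2)) := by fun_prop
  have hsplit : ∫ θ in (0:ℝ)..(π / 2), f θ
      = (∫ θ in (0:ℝ)..(π / 2), (2 * sin θ ^ 2 - 1) * w (sin θ ^ 2))
        - c * ∫ θ in (0:ℝ)..(π / 2), (2 * sin θ ^ 2 - 1) := by
    rw [← intervalIntegral.integral_const_mul, ← intervalIntegral.integral_sub
      (ContinuousOn.intervalIntegrable (by rw [uIcc_of_le pi_div_two_pos.le]; fun_prop))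
      ((by fun_prop : Continuous fun θ => c * (2 * sin θ ^ 2 - 1)).intervalIntegrable _ _)]
    congr 1 with θ
    simp only [f]
    ring
  rw [integral_two_mul_sin_sq_sub_one, mul_zero, sub_zero] at hsplit
  have hle : ∀ θ ∈ Ioc 0 (π / 2), (0 : ℝ) ≤ f θ := by
    intro θ _
    have hu : sin θ ^ 2 ∈ Icc (0 : ℝ) 1 := ⟨sq_nonneg _, sin_sq_le_one θ⟩
    rcases le_total (sin θ ^ 2) (1 / 2) with h | h
    · exact mul_nonneg_of_nonpos_of_nonpos (by linarith)
        (sub_nonpos.2 (hw.monotoneOn hu half_mem h))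
    · exact mul_nonneg (by linarith) (sub_nonneg.2 (hw.monotoneOn half_mem hu h))
  have hlt : (0 : ℝ) < f 0 := by
    have : w 0 < c := hw ⟨le_rfl, zero_le_one⟩ half_mem (by norm_num)
    simpa [f] using this
  have := intervalIntegral.integral_lt_integral_of_continuousOn_of_le_of_exists_lt
    (f := fun _ => (0 : ℝ)) pi_div_two_pos continuousOn_const hfc hle
    ⟨0, ⟨le_rfl, pi_div_two_pos.le⟩, hlt⟩
  simpa [hsplit] using this

lemma strictMonoOn_one_div_sqrt_one_sub_mul (hs0 : 0 < s) (hs1 : s < 1) :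
    StrictMonoOn (fun u => 1 / √(1 - s * u)) (Icc 0 1) := by
  intro u _ v hv huv
  have hv' : 0 < 1 - s * v := by nlinarith [hv.2]
  exact one_div_lt_one_div_of_lt (Real.sqrt_pos.2 hv') (Real.sqrt_lt_sqrt hv'.le (by nlinarith))

lemma strictMonoOn_neg_sqrt_one_sub_mul (hs0 : 0 < s) (hs1 : s ≤ 1) :
    StrictMonoOn (fun u => -√(1 - s * u)) (Icc 0 1) := by
  intro u _ v hv huv
  exact neg_lt_neg (Real.sqrt_lt_sqrt (by nlinarith [hv.2]) (by nlinarith))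

lemma integral_sub_mul_div_sqrt (hs : s < 1) (a b : ℝ) :
    ∫ θ in (0:ℝ)..(π / 2), (a - b * (1 - s * sin θ ^ 2)) / √(1 - s * sin θ ^ 2)
      = a * Kel s - b * Eel s := by
  have hK : Continuous fun θ => a * (1 / √(1 - s * sin θ ^ 2)) :=
    continuous_const.mul (continuous_div_sqrt_one_sub_mul_sin_sq hs continuous_const)
  have hE : Continuous fun θ => b * √(1 - s * sin θ ^ 2) := by fun_prop
  unfold Kel Eel
  rw [← intervalIntegral.integral_const_mul, ← intervalIntegral.integral_const_mul,
    ← intervalIntegral.integral_sub (hK.intervalIntegrable _ _) (hE.intervalIntegrable _ _)]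
  congr 1 with θ
  have hsq := Real.sq_sqrt (one_sub_mul_sin_sq_pos hs θ).le
  field_simp
  rw [hsq]

lemma Eel_pos (hs : s < 1) : 0 < Eel s :=
  intervalIntegral.intervalIntegral_pos_of_pos ((by fun_prop : Continuous fun θ =>
    √(1 - s * sin θ ^ 2)).intervalIntegrable _ _) (sqrt_one_sub_mul_sin_sq_pos hs) pi_div_two_pos

lemma Eel_lt_mul_Kel (hs0 : 0 < s) (hs1 : s < 1) : Eel s < (1 - s / 2) * Kel s := by
  have hcheb := integral_two_mul_sin_sq_sub_one_mul_pos
    (strictMonoOn_one_div_sqrt_one_sub_mul hs0 hs1)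
    (continuousOn_const.div (by fun_prop) fun u hu => (Real.sqrt_pos.2 (by nlinarith [hu.2])).ne')
  have hdiff : (1 - s / 2) * Kel s - 1 * Eel s
      = s / 2 * ∫ θ in (0:ℝ)..(π / 2),
          (2 * sin θ ^ 2 - 1) * (1 / √(1 - s * sin θ ^ 2)) := by
    rw [← integral_sub_mul_div_sqrt hs1, ← intervalIntegral.integral_const_mul]
    congr 1 with θ
    ring
  linarith [mul_pos (half_pos hs0) hcheb]

lemma mul_Kel_lt_mul_Eel (hs0 : 0 < s) (hs1 : s < 1) : (1 - s) * Kel s < (1 - s / 2) * Eel s := by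
  have hcheb := integral_two_mul_sin_sq_sub_one_mul_pos
    (strictMonoOn_neg_sqrt_one_sub_mul hs0 hs1.le) (by fun_prop)
  have hle : ∫ θ in (0:ℝ)..(π / 2), s / 2 * ((2 * sin θ ^ 2 - 1) * -√(1 - s * sin θ ^ 2))
      ≤ ∫ θ in (0:ℝ)..(π / 2),
        (-(1 - s) - -(1 - s / 2) * (1 - s * sin θ ^ 2)) / √(1 - s * sin θ ^ 2) := by
    have hc : Continuous fun θ => s / 2 * ((2 * sin θ ^ 2 - 1) * -√(1 - s * sin θ ^ 2)) := by
      fun_prop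
    refine intervalIntegral.integral_mono_on pi_div_two_pos.le (hc.intervalIntegrable _ _)
      ((continuous_div_sqrt_one_sub_mul_sin_sq hs1 (by fun_prop)).intervalIntegrable _ _)
      fun θ _ => ?_
    have hpos := sqrt_one_sub_mul_sin_sq_pos hs1 θ
    have hsq := Real.sq_sqrt (one_sub_mul_sin_sq_pos hs1 θ).le
    have hgap : 0 ≤ s ^ 2 * (sin θ ^ 2 * (1 - sin θ ^ 2)) :=
      mul_nonneg (sq_nonneg s) (mul_nonneg (sq_nonneg _) (sub_nonneg.2 (sin_sq_le_one θ)))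
    rw [le_div_iff₀ hpos]
    -- after multiplying by `Δ`, the two sides differ by `s² sin² θ cos² θ`
    linear_combination hgap + (-(s / 2) * (2 * sin θ ^ 2 - 1)) * hsq
  rw [intervalIntegral.integral_const_mul, integral_sub_mul_div_sqrt hs1] at hle
  linarith [mul_pos (half_pos hs0) hcheb]

end KERatio

open KERatio in
/-- For `0 < s < 1`, `1/(1 - s/2) < K(s)/E(s) < (1 - s/2)/(1 - s)`. -/
theorem KE_ratio_bounds (s : ℝ) (hs0 : 0 < s) (hs1 : s < 1) :
    1 / (1 - s / 2) < Kel s / Eel s ∧ Kel s / Eel s < (1 - s / 2) / (1 - s) := by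
  have hE := Eel_pos hs1
  constructor
  · rw [div_lt_div_iff₀ (by linarith) hE]
    linarith [Eel_lt_mul_Kel hs0 hs1]
  · rw [div_lt_div_iff₀ hE (by linarith)]
    linarith [mul_Kel_lt_mul_Eel hs0 hs1]
end

section
/- For 0 < s < 1 the function g(s) = (1-s)(K(s)/E(s))² - 2(K(s)/E(s)) + (4+s)/(4-3s) is negative, where K and E are the complete elliptic integrals of the first and second kind. -/
open Real Filter Topology Set

open MeasureTheory intervalIntegral

/-!
Write `g = F / E²` with `F = (1 - s) K² - 2 K E + (4 + s) / (4 - 3 s) E²`. Legendre's formulas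
`E' = (E - K) / (2 s)` and `K' = (E - (1 - s) K) / (2 s (1 - s))` give the chain
`F' = -E / (2 (4 - 3 s)² (1 - s)) · H`, `H' = P`, `P' = 9 / (2 (1 - s)) · Q`, `Q' = R`, where
`H, P, Q` are explicit combinations of `K` and `E` that vanish at `s = 0`, and
`R = (15 E - 11 K) / 2` is decreasing because `E ≤ K`. A function vanishing at `0` whose
derivative stays nonpositive once it is nonpositive has the same property, so this passes from
`R` up to `H`. Since `16 - 20 s + 3 s² < 0` near `s = 1`, `H` is positive there, hence on all of
`(0, 1)`; so `F` decreases from `F 0 = 0`.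
-/

def StaysNonposOn (f : ℝ → ℝ) (a b : ℝ) : Prop :=
  ∀ ⦃u v⦄, a < u → u ≤ v → v < b → f u ≤ 0 → f v ≤ 0

theorem AntitoneOn.staysNonposOn {f : ℝ → ℝ} {a b : ℝ} (hf : AntitoneOn f (Ioo a b)) :
    StaysNonposOn f a b := fun _ _ hau huv hvb hu =>
  (hf ⟨hau, huv.trans_lt hvb⟩ ⟨hau.trans_le huv, hvb⟩ huv).trans hu

theorem StaysNonposOn.pos_mul {f w : ℝ → ℝ} {a b : ℝ} (hf : StaysNonposOn f a b)
    (hw : ∀ x ∈ Ioo a b, 0 < w x) : StaysNonposOn (fun x => w x * f x) a b := by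
  intro u v hau huv hvb hu
  have hu' : f u ≤ 0 := nonpos_of_mul_nonpos_right hu (hw u ⟨hau, huv.trans_lt hvb⟩)
  exact mul_nonpos_of_nonneg_of_nonpos (hw v ⟨hau.trans_le huv, hvb⟩).le (hf hau huv hvb hu')

/-- By the mean value theorem `f u ≤ f a = 0` forces `f' ≤ 0` somewhere in `(a, u)`, hence on
all of `[u, b)`. -/
theorem StaysNonposOn.of_hasDerivAt {f f' : ℝ → ℝ} {a b : ℝ} (hf : ContinuousOn f (Ico a b))
    (hfa : f a = 0) (hderiv : ∀ x ∈ Ioo a b, HasDerivAt f (f' x) x)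
    (hf' : StaysNonposOn f' a b) : StaysNonposOn f a b := by
  intro u v hau huv hvb hu
  obtain ⟨t, ht, hslope⟩ := exists_hasDerivAt_eq_slope f f' hau
    (hf.mono (Icc_subset_Ico_right (huv.trans_lt hvb)))
    (fun x hx => hderiv x ⟨hx.1, hx.2.trans (huv.trans_lt hvb)⟩)
  have ht' : f' t ≤ 0 := by
    rw [hslope, hfa]
    exact div_nonpos_of_nonpos_of_nonneg (by linarith) (by linarith)
  rcases huv.eq_or_lt with rfl | huv
  · exact hu
  obtain ⟨c, hc, hslope'⟩ := exists_hasDerivAt_eq_slope f f' huv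
    (hf.mono (Icc_subset_Ico_iff huv.le |>.2 ⟨hau.le, hvb⟩))
    (fun x hx => hderiv x ⟨hau.trans hx.1, hx.2.trans hvb⟩)
  have hc' : f' c ≤ 0 := hf' ht.1 (ht.2.trans hc.1).le (hc.2.trans hvb) ht'
  rw [hslope', div_nonpos_iff] at hc'
  rcases hc' with ⟨-, h⟩ | ⟨h, -⟩ <;> linarith

theorem hasDerivAt_intervalIntegral_of_continuousOn {F F' : ℝ → ℝ → ℝ} {U : Set ℝ} {x₀ : ℝ}
    (a b : ℝ) (hU : IsOpen U) (hx₀ : x₀ ∈ U) (hF : ∀ x ∈ U, Continuous (F x))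
    (hF' : ContinuousOn (fun p : ℝ × ℝ => F' p.1 p.2) (U ×ˢ univ))
    (hderiv : ∀ x ∈ U, ∀ t, HasDerivAt (F · t) (F' x t) x) :
    HasDerivAt (fun x => ∫ t in a..b, F x t) (∫ t in a..b, F' x₀ t) x₀ := by
  obtain ⟨ε, hε, hεU⟩ := Metric.nhds_basis_closedBall.mem_iff.1 (hU.mem_nhds hx₀)
  obtain ⟨C, hC⟩ := ((isCompact_closedBall x₀ ε).prod isCompact_uIcc).exists_bound_of_continuousOn
    (hF'.mono (prod_mono hεU (subset_univ (uIcc a b))))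
  have hF'x₀ : Continuous (F' x₀) :=
    hF'.comp_continuous (Continuous.prodMk_right x₀) fun t => ⟨hx₀, trivial⟩
  refine (hasDerivAt_integral_of_dominated_loc_of_deriv_le (bound := fun _ => C)
    (Metric.ball_mem_nhds x₀ hε) ?_ ((hF x₀ hx₀).intervalIntegrable _ _)
    hF'x₀.aestronglyMeasurable (ae_of_all _ ?_) intervalIntegrable_const (ae_of_all _ ?_)).2
  · filter_upwards [hU.mem_nhds hx₀] with x hx using (hF x hx).aestronglyMeasurable
  · exact fun t ht x hx => hC (x, t) ⟨Metric.ball_subset_closedBall hx, uIoc_subset_uIcc ht⟩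
  · exact fun t _ x hx => hderiv x (hεU (Metric.ball_subset_closedBall hx)) t

theorem one_sub_mul_sin_sq_pos {s : ℝ} (hs : s < 1) (θ : ℝ) : 0 < 1 - s * sin θ ^ 2 := by
  have h₀ := sq_nonneg (sin θ)
  have h₁ := sin_sq_le_one θ
  rcases le_or_gt s 0 with h | h <;> nlinarith

theorem sqrt_one_sub_mul_sin_sq_pos {s : ℝ} (hs : s < 1) (θ : ℝ) :
    0 < √(1 - s * sin θ ^ 2) :=
  Real.sqrt_pos.2 (one_sub_mul_sin_sq_pos hs θ)

theorem Kel_zero : Kel 0 = π / 2 := by simp [Kel]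

theorem Eel_zero : Eel 0 = π / 2 := by simp [Eel]

theorem continuous_sqrt_one_sub_mul_sin_sq (s : ℝ) : Continuous fun θ => √(1 - s * sin θ ^ 2) := by
  fun_prop

theorem Eel_pos {s : ℝ} (hs : s < 1) : 0 < Eel s :=
  intervalIntegral_pos_of_pos_on ((continuous_sqrt_one_sub_mul_sin_sq s).intervalIntegrable _ _)
    (fun θ _ => sqrt_one_sub_mul_sin_sq_pos hs θ) (by positivity)

theorem continuous_one_div_sqrt_one_sub_mul_sin_sq {s : ℝ} (hs : s < 1) :
    Continuous fun θ => 1 / √(1 - s * sin θ ^ 2) :=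
  continuous_const.div (by fun_prop) fun θ => (sqrt_one_sub_mul_sin_sq_pos hs θ).ne'

theorem Eel_le_Kel {s : ℝ} (hs₀ : 0 ≤ s) (hs₁ : s < 1) : Eel s ≤ Kel s := by
  refine integral_mono_on (by positivity)
    ((continuous_sqrt_one_sub_mul_sin_sq s).intervalIntegrable _ _)
    ((continuous_one_div_sqrt_one_sub_mul_sin_sq hs₁).intervalIntegrable _ _) fun θ _ => ?_
  have hA := one_sub_mul_sin_sq_pos hs₁ θ
  rw [le_div_iff₀ (Real.sqrt_pos.2 hA), Real.mul_self_sqrt hA.le]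
  nlinarith [sq_nonneg (sin θ)]

theorem Kel_pos {s : ℝ} (hs : s < 1) : 0 < Kel s :=
  intervalIntegral_pos_of_pos_on
    ((continuous_one_div_sqrt_one_sub_mul_sin_sq hs).intervalIntegrable _ _)
    (fun θ _ => one_div_pos.2 (sqrt_one_sub_mul_sin_sq_pos hs θ)) (by positivity)

theorem hasDerivAt_Eel_integral {s : ℝ} (hs : s < 1) :
    HasDerivAt Eel (∫ θ in (0:ℝ)..(π / 2), -sin θ ^ 2 / (2 * √(1 - s * sin θ ^ 2))) s := by
  refine hasDerivAt_intervalIntegral_of_continuousOn (F := fun x θ => √(1 - x * sin θ ^ 2))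
    (F' := fun x θ => -sin θ ^ 2 / (2 * √(1 - x * sin θ ^ 2)))
    _ _ isOpen_Iio hs (fun x _ => continuous_sqrt_one_sub_mul_sin_sq x)
    ?_ fun x hx θ => ?_
  · refine ContinuousOn.div (by fun_prop) (by fun_prop) fun p hp => ?_
    exact (mul_pos two_pos (sqrt_one_sub_mul_sin_sq_pos hp.1 p.2)).ne'
  · exact (((hasDerivAt_id' x).mul_const (sin θ ^ 2)).const_sub 1 |>.sqrt
      (one_sub_mul_sin_sq_pos hx θ).ne').congr_deriv (by ring)

theorem hasDerivAt_Kel_integral {s : ℝ} (hs : s < 1) :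
    HasDerivAt Kel (∫ θ in (0:ℝ)..(π / 2), sin θ ^ 2 / (2 * √(1 - s * sin θ ^ 2) ^ 3)) s := by
  refine hasDerivAt_intervalIntegral_of_continuousOn
    (F' := fun x θ => sin θ ^ 2 / (2 * √(1 - x * sin θ ^ 2) ^ 3)) _ _ isOpen_Iio hs
    (fun x hx => continuous_one_div_sqrt_one_sub_mul_sin_sq hx) ?_ fun x hx θ => ?_
  · refine ContinuousOn.div (by fun_prop) (by fun_prop) fun p hp => ?_
    have := sqrt_one_sub_mul_sin_sq_pos hp.1 p.2
    positivity
  · have hA := sqrt_one_sub_mul_sin_sq_pos hx θ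
    refine ((hasDerivAt_const x (1 : ℝ)).fun_div (((hasDerivAt_id' x).mul_const
      (sin θ ^ 2)).const_sub 1 |>.sqrt (one_sub_mul_sin_sq_pos hx θ).ne') hA.ne').congr_deriv ?_
    field_simp
    ring

@[fun_prop]
theorem continuousOn_Kel : ContinuousOn Kel (Iio 1) :=
  fun _ hs => (hasDerivAt_Kel_integral hs).continuousAt.continuousWithinAt

@[fun_prop]
theorem continuousOn_Eel : ContinuousOn Eel (Iio 1) :=
  fun _ hs => (hasDerivAt_Eel_integral hs).continuousAt.continuousWithinAt

theorem hasDerivAt_Eel {s : ℝ} (hs₀ : s ≠ 0) (hs₁ : s < 1) :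
    HasDerivAt Eel ((Eel s - Kel s) / (2 * s)) s := by
  refine (hasDerivAt_Eel_integral hs₁).congr_deriv ?_
  have hpt : ∀ θ, -sin θ ^ 2 / (2 * √(1 - s * sin θ ^ 2))
      = (√(1 - s * sin θ ^ 2) - 1 / √(1 - s * sin θ ^ 2)) / (2 * s) := by
    intro θ
    have hr := sqrt_one_sub_mul_sin_sq_pos hs₁ θ
    have hsq := Real.sq_sqrt (one_sub_mul_sin_sq_pos hs₁ θ).le
    set r := √(1 - s * sin θ ^ 2)
    field_simp
    linear_combination -hsq
  simp_rw [hpt]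
  rw [intervalIntegral.integral_div, integral_sub
    ((continuous_sqrt_one_sub_mul_sin_sq s).intervalIntegrable _ _)
    ((continuous_one_div_sqrt_one_sub_mul_sin_sq hs₁).intervalIntegrable _ _)]
  rfl

theorem hasDerivAt_sin_mul_cos_div_sqrt {s : ℝ} (hs : s < 1) (θ : ℝ) :
    HasDerivAt (fun t => sin t * cos t / √(1 - s * sin t ^ 2))
      ((1 - 2 * sin θ ^ 2 + s * sin θ ^ 4) / √(1 - s * sin θ ^ 2) ^ 3) θ := by
  have hr := sqrt_one_sub_mul_sin_sq_pos hs θ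
  have hsq := Real.sq_sqrt (one_sub_mul_sin_sq_pos hs θ).le
  refine (((hasDerivAt_sin θ).fun_mul (hasDerivAt_cos θ)).fun_div
    ((((hasDerivAt_sin θ).fun_pow 2).const_mul s).const_sub 1 |>.sqrt
      (one_sub_mul_sin_sq_pos hs θ).ne') hr.ne').congr_deriv ?_
  have hc := cos_sq' θ
  set r := √(1 - s * sin θ ^ 2)
  field_simp
  norm_num only
  linear_combination 2 * (cos θ ^ 2 - sin θ ^ 2) * hsq + 2 * hc

theorem continuous_deriv_sin_mul_cos_div_sqrt {s : ℝ} (hs : s < 1) :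
    Continuous fun θ => (1 - 2 * sin θ ^ 2 + s * sin θ ^ 4) / √(1 - s * sin θ ^ 2) ^ 3 :=
  Continuous.div (by fun_prop) (by fun_prop) fun θ =>
    pow_ne_zero 3 (sqrt_one_sub_mul_sin_sq_pos hs θ).ne'

theorem integral_deriv_sin_mul_cos_div_sqrt {s : ℝ} (hs : s < 1) :
    ∫ θ in (0:ℝ)..(π / 2), (1 - 2 * sin θ ^ 2 + s * sin θ ^ 4) / √(1 - s * sin θ ^ 2) ^ 3 = 0 := by
  rw [integral_eq_sub_of_hasDerivAt (fun θ _ => hasDerivAt_sin_mul_cos_div_sqrt hs θ)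
    ((continuous_deriv_sin_mul_cos_div_sqrt hs).intervalIntegrable _ _)]
  simp

theorem hasDerivAt_Kel {s : ℝ} (hs₀ : s ≠ 0) (hs₁ : s < 1) :
    HasDerivAt Kel ((Eel s - (1 - s) * Kel s) / (2 * s * (1 - s))) s := by
  refine (hasDerivAt_Kel_integral hs₁).congr_deriv ?_
  -- the last term is the derivative of `sin θ cos θ / √(1 - s sin² θ)`, which vanishes at `0`
  -- and `π / 2`, so it integrates to zero
  have hpt : ∀ θ, sin θ ^ 2 / (2 * √(1 - s * sin θ ^ 2) ^ 3)
      = (√(1 - s * sin θ ^ 2) - (1 - s) * (1 / √(1 - s * sin θ ^ 2))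
        - s * ((1 - 2 * sin θ ^ 2 + s * sin θ ^ 4) / √(1 - s * sin θ ^ 2) ^ 3))
        / (2 * s * (1 - s)) := by
    intro θ
    have hr := sqrt_one_sub_mul_sin_sq_pos hs₁ θ
    have hsq := Real.sq_sqrt (one_sub_mul_sin_sq_pos hs₁ θ).le
    have h₁ : 1 - s ≠ 0 := by linarith
    set r := √(1 - s * sin θ ^ 2)
    field_simp
    linear_combination (1 - s - r ^ 2 - (1 - s * sin θ ^ 2)) * hsq
  have hE := (continuous_sqrt_one_sub_mul_sin_sq s).intervalIntegrable (μ := volume) 0 (π / 2)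
  have hK := ((continuous_one_div_sqrt_one_sub_mul_sin_sq hs₁).const_mul (1 - s)).intervalIntegrable
    (μ := volume) 0 (π / 2)
  have hφ := ((continuous_deriv_sin_mul_cos_div_sqrt hs₁).const_mul s).intervalIntegrable
    (μ := volume) 0 (π / 2)
  simp_rw [hpt]
  rw [intervalIntegral.integral_div, integral_sub (hE.sub hK) hφ, integral_sub hE hK,
    intervalIntegral.integral_const_mul, intervalIntegral.integral_const_mul,
    integral_deriv_sin_mul_cos_div_sqrt hs₁]
  simp [Eel, Kel]

namespace Elliptic

noncomputable def F (s : ℝ) : ℝ :=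
  (1 - s) * Kel s ^ 2 - 2 * Kel s * Eel s + (4 + s) / (4 - 3 * s) * Eel s ^ 2

noncomputable def H (s : ℝ) : ℝ :=
  8 * (1 - s) * (4 - 3 * s) * Kel s - 2 * (16 - 20 * s + 3 * s ^ 2) * Eel s

noncomputable def P (s : ℝ) : ℝ := (48 - 15 * s) * Eel s - (48 - 39 * s) * Kel s

noncomputable def Q (s : ℝ) : ℝ := 6 * (1 - s) * Kel s - (6 - 5 * s) * Eel s

noncomputable def R (s : ℝ) : ℝ := (15 * Eel s - 11 * Kel s) / 2

theorem F_zero : F 0 = 0 := by simp [F, Kel_zero, Eel_zero]; ring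
theorem H_zero : H 0 = 0 := by simp [H, Kel_zero, Eel_zero]; ring
theorem P_zero : P 0 = 0 := by simp [P, Kel_zero, Eel_zero]
theorem Q_zero : Q 0 = 0 := by simp [Q, Kel_zero, Eel_zero]

theorem continuousOn_F : ContinuousOn F (Iio 1) := by
  unfold F
  fun_prop (disch := intro x hx; simp only [mem_Iio] at hx; linarith)

theorem continuousOn_H : ContinuousOn H (Iio 1) := by unfold H; fun_prop
theorem continuousOn_P : ContinuousOn P (Iio 1) := by unfold P; fun_prop
theorem continuousOn_Q : ContinuousOn Q (Iio 1) := by unfold Q; fun_prop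
theorem continuousOn_R : ContinuousOn R (Iio 1) := by unfold R; fun_prop

theorem hasDerivAt_F {s : ℝ} (hs₀ : s ≠ 0) (hs₁ : s < 1) :
    HasDerivAt F (-(Eel s / (2 * (4 - 3 * s) ^ 2 * (1 - s))) * H s) s := by
  have h₁ : 1 - s ≠ 0 := by linarith
  have hK := hasDerivAt_Kel hs₀ hs₁
  have hE := hasDerivAt_Eel hs₀ hs₁
  have hq : HasDerivAt (fun x => (4 + x) / (4 - 3 * x)) (16 / (4 - 3 * s) ^ 2) s :=
    (((hasDerivAt_id' s).const_add 4).fun_div (((hasDerivAt_id' s).const_mul 3).const_sub 4)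
      (by linarith)).congr_deriv (by ring)
  refine ((((hasDerivAt_id' s).const_sub 1).fun_mul (hK.fun_pow 2)).fun_sub
    ((hK.const_mul 2).fun_mul hE) |>.fun_add (hq.fun_mul (hE.fun_pow 2))).congr_deriv ?_
  unfold H
  -- `field_simp` normalises `4 - 3 * s` to this form before looking for it
  have h₂ : 4 - s * 3 ≠ 0 := by linarith
  field_simp
  ring

theorem hasDerivAt_H {s : ℝ} (hs₀ : s ≠ 0) (hs₁ : s < 1) : HasDerivAt H (P s) s := by
  have h₁ : 1 - s ≠ 0 := by linarith
  refine ((((((hasDerivAt_id' s).const_sub 1).const_mul 8).fun_mul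
    (((hasDerivAt_id' s).const_mul 3).const_sub 4)).fun_mul (hasDerivAt_Kel hs₀ hs₁)).fun_sub
    (((((hasDerivAt_id' s).const_mul 20).const_sub 16).fun_add ((hasDerivAt_pow 2 s).const_mul 3)
      |>.const_mul 2).fun_mul (hasDerivAt_Eel hs₀ hs₁))).congr_deriv ?_
  unfold P
  field_simp
  ring

theorem hasDerivAt_P {s : ℝ} (hs₀ : s ≠ 0) (hs₁ : s < 1) :
    HasDerivAt P (9 / (2 * (1 - s)) * Q s) s := by
  have h₁ : 1 - s ≠ 0 := by linarith
  refine (((((hasDerivAt_id' s).const_mul 15).const_sub 48).fun_mul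
    (hasDerivAt_Eel hs₀ hs₁)).fun_sub ((((hasDerivAt_id' s).const_mul 39).const_sub 48).fun_mul
      (hasDerivAt_Kel hs₀ hs₁))).congr_deriv ?_
  unfold Q
  field_simp
  ring

theorem hasDerivAt_Q {s : ℝ} (hs₀ : s ≠ 0) (hs₁ : s < 1) : HasDerivAt Q (R s) s := by
  have h₁ : 1 - s ≠ 0 := by linarith
  refine (((((hasDerivAt_id' s).const_sub 1).const_mul 6).fun_mul (hasDerivAt_Kel hs₀ hs₁)).fun_sub
    ((((hasDerivAt_id' s).const_mul 5).const_sub 6).fun_mul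
      (hasDerivAt_Eel hs₀ hs₁))).congr_deriv ?_
  unfold R
  field_simp
  ring

theorem hasDerivAt_R {s : ℝ} (hs₀ : s ≠ 0) (hs₁ : s < 1) :
    HasDerivAt R (((4 - 15 * s) * Eel s - 4 * (1 - s) * Kel s) / (4 * s * (1 - s))) s := by
  have h₁ : 1 - s ≠ 0 := by linarith
  refine ((((hasDerivAt_Eel hs₀ hs₁).const_mul 15).fun_sub
    ((hasDerivAt_Kel hs₀ hs₁).const_mul 11)).div_const 2).congr_deriv ?_
  field_simp
  ring

theorem antitoneOn_R : AntitoneOn R (Ioo 0 1) := by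
  refine antitoneOn_of_hasDerivWithinAt_nonpos (convex_Ioo 0 1)
    (f' := fun x => ((4 - 15 * x) * Eel x - 4 * (1 - x) * Kel x) / (4 * x * (1 - x)))
    (continuousOn_R.mono Ioo_subset_Iio_self) (fun x hx => ?_) fun x hx => ?_
  · rw [interior_Ioo] at hx
    exact (hasDerivAt_R hx.1.ne' hx.2).hasDerivWithinAt
  · rw [interior_Ioo] at hx
    obtain ⟨hx₀, hx₁⟩ := hx
    have hEK := Eel_le_Kel hx₀.le hx₁
    have hE := Eel_pos hx₁
    refine div_nonpos_of_nonpos_of_nonneg ?_ (by nlinarith)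
    rcases le_or_gt (4 - 15 * x) 0 with h | h <;> nlinarith

theorem staysNonposOn_H : StaysNonposOn H 0 1 := by
  have hQ : StaysNonposOn Q 0 1 :=
    .of_hasDerivAt (continuousOn_Q.mono Ico_subset_Iio_self) Q_zero
      (fun x hx => hasDerivAt_Q hx.1.ne' hx.2) antitoneOn_R.staysNonposOn
  have hP : StaysNonposOn P 0 1 :=
    .of_hasDerivAt (continuousOn_P.mono Ico_subset_Iio_self) P_zero
      (fun x hx => hasDerivAt_P hx.1.ne' hx.2)
      (hQ.pos_mul fun x hx => div_pos (by norm_num) (by linarith [hx.2]))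
  exact .of_hasDerivAt (continuousOn_H.mono Ico_subset_Iio_self) H_zero
    (fun x hx => hasDerivAt_H hx.1.ne' hx.2) hP

theorem H_pos_of_le {s : ℝ} (hs₀ : 24 / 25 ≤ s) (hs₁ : s < 1) : 0 < H s := by
  have hK := Kel_pos hs₁
  have hE := Eel_pos hs₁
  have hq : 16 - 20 * s + 3 * s ^ 2 ≤ 0 := by nlinarith
  unfold H
  nlinarith [mul_pos (mul_pos (by linarith : (0:ℝ) < 1 - s) (by linarith : (0:ℝ) < 4 - 3 * s)) hK,
    mul_nonneg (neg_nonneg.2 hq) hE.le]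

theorem H_pos {s : ℝ} (hs₀ : 0 < s) (hs₁ : s < 1) : 0 < H s := by
  by_contra! h
  exact (H_pos_of_le (le_max_right s _) (max_lt hs₁ (by norm_num))).not_ge
    (staysNonposOn_H hs₀ (le_max_left s (24 / 25)) (max_lt hs₁ (by norm_num)) h)

theorem F_neg {s : ℝ} (hs₀ : 0 < s) (hs₁ : s < 1) : F s < 0 := by
  obtain ⟨c, ⟨hc₀, hcs⟩, hslope⟩ := exists_hasDerivAt_eq_slope F _ hs₀
    (continuousOn_F.mono (Icc_subset_Iio_iff hs₀.le |>.2 hs₁))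
    (fun x hx => hasDerivAt_F hx.1.ne' (hx.2.trans hs₁))
  have hc₁ : c < 1 := hcs.trans hs₁
  have hderiv : -(Eel c / (2 * (4 - 3 * c) ^ 2 * (1 - c))) * H c < 0 :=
    mul_neg_of_neg_of_pos (neg_neg_of_pos (div_pos (Eel_pos hc₁) (mul_pos
      (mul_pos two_pos (pow_pos (by linarith) 2)) (sub_pos.2 hc₁)))) (H_pos hc₀ hc₁)
  rw [hslope, F_zero, sub_zero, sub_zero, div_neg_iff] at hderiv
  rcases hderiv with ⟨-, h⟩ | ⟨h, -⟩ <;> linarith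

end Elliptic

/-- For `0 < s < 1`, `(1-s)(K/E)² - 2(K/E) + (4+s)/(4-3s) < 0`. -/
theorem g_neg (s : ℝ) (hs0 : 0 < s) (hs1 : s < 1) :
    (1 - s) * (Kel s / Eel s) ^ 2 - 2 * (Kel s / Eel s) + (4 + s) / (4 - 3 * s) < 0 := by
  have hE := Eel_pos hs1
  have hg : (1 - s) * (Kel s / Eel s) ^ 2 - 2 * (Kel s / Eel s) + (4 + s) / (4 - 3 * s)
      = Elliptic.F s / Eel s ^ 2 := by
    unfold Elliptic.F
    field_simp
  rw [hg]
  exact div_neg_of_neg_of_pos (Elliptic.F_neg hs0 hs1) (by positivity)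
end
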